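/- Proposition 5, Eq. (17) (Lipschitz-constant lower bound in multi-class classification): assume V ≠ 0 and that x is correctly classified, i.e., p(x)_y ≥ p(x)ₖ for all k, and set ξ = log K − L(x, y) = log K + log p(x)_y (which is ≥ 0). Then every r ∈ ℝⁿ satisfying L(x, y) + ∇ᵀr + (1/2)·rᵀHr ≥ log K has ‖r‖₂ ≥ (1/(p(x)_y·‖V‖_F))·(√(1 + p(x)_y·ξ/(1 − p(x)_y)) − 1). -/

import Mathlib

open scoped RealInnerProductSpace

/-- The softmax probability of class `k` for the `K`-class linear classifier. -/
noncomputable def smax {n K : ℕ} (v : Fin K → EuclideanSpace ℝ (Fin n)) (k : Fin K)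
    (x : EuclideanSpace ℝ (Fin n)) : ℝ :=
  Real.exp ⟪v k, x⟫ / ∑ j, Real.exp ⟪v j, x⟫

/-- The multi-class cross-entropy loss `L(x, y) = −log p(x)_y`. -/
noncomputable def mcloss {n K : ℕ} (v : Fin K → EuclideanSpace ℝ (Fin n)) (y : Fin K)
    (x : EuclideanSpace ℝ (Fin n)) : ℝ :=
  - Real.log (smax v y x)

/-- The outer product `u wᵀ` of two vectors, as an `n × n` matrix. -/
noncomputable def outer {n : ℕ} (u w : EuclideanSpace ℝ (Fin n)) : Matrix (Fin n) (Fin n) ℝ :=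
  Matrix.vecMulVec (fun i => u i) (fun i => w i)

/-- The input-gradient `∇ = V(p(x) − 𝐲) = Σₖ (p(x)ₖ − 𝐲ₖ) vₖ` of the multi-class
cross-entropy loss. -/
noncomputable def mcgrad {n K : ℕ} (v : Fin K → EuclideanSpace ℝ (Fin n)) (y : Fin K)
    (x : EuclideanSpace ℝ (Fin n)) : EuclideanSpace ℝ (Fin n) :=
  ∑ k, (smax v k x - if k = y then (1 : ℝ) else 0) • v k

/-- The input-Hessian `H = Σ_{i<j} p(x)ᵢ p(x)ⱼ (vᵢ − vⱼ)(vᵢ − vⱼ)ᵀ` of the multi-class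
cross-entropy loss. -/
noncomputable def mchess {n K : ℕ} (v : Fin K → EuclideanSpace ℝ (Fin n))
    (x : EuclideanSpace ℝ (Fin n)) : Matrix (Fin n) (Fin n) ℝ :=
  ∑ i : Fin K, ∑ j : Fin K,
    if i < j then (smax v i x * smax v j x) • outer (v i - v j) (v i - v j) else 0

/-- The Frobenius norm of the matrix `V` whose columns are `v₀, …, v_{K−1}`. -/
noncomputable def frobV {n K : ℕ} (v : Fin K → EuclideanSpace ℝ (Fin n)) : ℝ :=
  Real.sqrt (∑ i, ∑ k, v k i ^ 2)

lemma pairSum {K : ℕ} (f : Fin K → Fin K → ℝ) (hsymm : ∀ i j, f i j = f j i) :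
    ∑ i : Fin K, ∑ j : Fin K, (if i < j then f i j else 0)
      = ((∑ i : Fin K, ∑ j : Fin K, f i j) - ∑ i : Fin K, f i i) / 2 := by
  have key : ∀ i j : Fin K, f i j = (if i < j then f i j else 0) +
      (if j < i then f i j else 0) + (if i = j then f i j else 0) := by
    intro i j
    rcases lt_trichotomy i j with h | h | h
    · simp [h, asymm h, h.ne]
    · simp [h, lt_irrefl]
    · simp [h, asymm h, h.ne']
  have hT : ∑ i : Fin K, ∑ j : Fin K, f i j
      = (∑ i : Fin K, ∑ j : Fin K, (if i < j then f i j else 0))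
      + (∑ i : Fin K, ∑ j : Fin K, (if j < i then f i j else 0))
      + ∑ i : Fin K, f i i := by
    calc ∑ i : Fin K, ∑ j : Fin K, f i j
        = ∑ i : Fin K, ∑ j : Fin K, ((if i < j then f i j else 0) +
            (if j < i then f i j else 0) + (if i = j then f i j else 0)) :=
          Finset.sum_congr rfl fun i _ => Finset.sum_congr rfl fun j _ => key i j
      _ = _ := by
          simp_rw [Finset.sum_add_distrib]
          congr 1
          exact Finset.sum_congr rfl fun i _ => by simp
  have hswap : ∑ i : Fin K, ∑ j : Fin K, (if j < i then f i j else 0)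
      = ∑ i : Fin K, ∑ j : Fin K, (if i < j then f i j else 0) := by
    rw [Finset.sum_comm]
    exact Finset.sum_congr rfl fun i _ => Finset.sum_congr rfl fun j _ => by
      rw [hsymm]
  rw [hswap] at hT
  linarith

lemma inner_outer {n : ℕ} (u r : EuclideanSpace ℝ (Fin n)) :
    ⟪r, Matrix.toEuclideanLin (outer u u) r⟫ = ⟪u, r⟫ ^ 2 := by
  have h1 : ⟪u, r⟫ = ∑ i, u i * r i := by
    simp [PiLp.inner_apply, RCLike.inner_apply, conj_trivial]
    exact Finset.sum_congr rfl fun i _ => mul_comm _ _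
  have h2 : ⟪r, Matrix.toEuclideanLin (outer u u) r⟫
      = ∑ i, r i * (u i * ∑ j, u j * r j) := by
    simp [PiLp.inner_apply, RCLike.inner_apply, conj_trivial, Matrix.toEuclideanLin_apply,
      outer, Matrix.mulVec, Matrix.vecMulVec_apply, dotProduct, Finset.mul_sum, Finset.sum_mul, mul_assoc]
    exact Finset.sum_congr rfl fun i _ => Finset.sum_congr rfl fun j _ => by ring
  rw [h2, h1, sq, Finset.sum_mul]
  exact Finset.sum_congr rfl fun i _ => by ring

set_option maxHeartbeats 1600000 in
/-- Proposition 5, Eq. (17) (Lipschitz-constant lower bound in multi-class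
classification): if `V ≠ 0`, `x` is correctly classified, and
`ξ = log K + log p(x)_y`, then every `r` with `L(x,y) + ∇ᵀr + (1/2) rᵀHr ≥ log K` has
`‖r‖₂ ≥ (1/(p(x)_y ‖V‖_F))(√(1 + p(x)_y ξ/(1 − p(x)_y)) − 1)`. -/
theorem stmt18 {n K : ℕ} (hK : 2 ≤ K) (v : Fin K → EuclideanSpace ℝ (Fin n)) (y : Fin K)
    (x : EuclideanSpace ℝ (Fin n))
    (hV : (Matrix.of fun i k => v k i : Matrix (Fin n) (Fin K) ℝ) ≠ 0)
    (hcorr : ∀ k, smax v k x ≤ smax v y x)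
    (r : EuclideanSpace ℝ (Fin n))
    (hr : mcloss v y x + ⟪mcgrad v y x, r⟫ +
        (1 / 2) * ⟪r, Matrix.toEuclideanLin (mchess v x) r⟫ ≥ Real.log K) :
    ‖r‖ ≥ 1 / (smax v y x * frobV v) *
        (Real.sqrt (1 + smax v y x * (Real.log K + Real.log (smax v y x)) /
          (1 - smax v y x)) - 1) := by
  have hKpos : 0 < K := by omega
  set q : Fin K → ℝ := fun k => smax v k x with hqdef
  set p : ℝ := q y with hpdef
  set C : ℝ := frobV v with hCdef
  set t : ℝ := ‖r‖ with htdef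
  have ht0 : 0 ≤ t := norm_nonneg r
  have hSpos : 0 < ∑ j, Real.exp ⟪v j, x⟫ :=
    Finset.sum_pos (fun j _ => Real.exp_pos _) ⟨y, Finset.mem_univ y⟩
  have hqpos : ∀ k, 0 < q k := fun k => div_pos (Real.exp_pos _) hSpos
  have hqsum : ∑ k, q k = 1 := by
    simp only [hqdef, smax, ← Finset.sum_div]
    exact div_self hSpos.ne'
  have hqle : ∀ k, q k ≤ p := hcorr
  have hpair : ∀ k, k ≠ y → q k + p ≤ 1 := by
    intro k hk
    have h1 : ∑ j ∈ ({k, y} : Finset (Fin K)), q j ≤ ∑ j, q j :=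
      Finset.sum_le_sum_of_subset_of_nonneg (Finset.subset_univ _)
        (fun j _ _ => (hqpos j).le)
    rw [Finset.sum_pair hk] at h1
    linarith [hqsum]
  have hp1 : p < 1 := by
    haveI : Nontrivial (Fin K) := Fin.nontrivial_iff_two_le.mpr hK
    obtain ⟨k, hk⟩ := exists_ne y
    have := hpair k hk
    linarith [hqpos k]
  have hppos : 0 < p := hqpos y
  -- Frobenius norm facts
  have hnormsq : ∀ k, ‖v k‖ ^ 2 = ∑ i, (v k i) ^ 2 := by
    intro k
    rw [EuclideanSpace.norm_eq, Real.sq_sqrt (Finset.sum_nonneg fun i _ => sq_nonneg _)]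
    simp [sq]
  have hC2 : C ^ 2 = ∑ k, ‖v k‖ ^ 2 := by
    rw [hCdef, frobV, Real.sq_sqrt (Finset.sum_nonneg fun i _ =>
      Finset.sum_nonneg fun k _ => sq_nonneg _), Finset.sum_comm]
    exact Finset.sum_congr rfl fun k _ => (hnormsq k).symm
  have hC0 : 0 ≤ C := Real.sqrt_nonneg _
  have hCpos : 0 < C := by
    rcases eq_or_lt_of_le hC0 with h | h
    · exfalso
      apply hV
      ext i k
      have hz : ∑ i, ∑ k, (v k i) ^ 2 = 0 := by
        by_contra hne
        have hpos : 0 < ∑ i, ∑ k, (v k i) ^ 2 :=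
          lt_of_le_of_ne (Finset.sum_nonneg fun i _ =>
            Finset.sum_nonneg fun k _ => sq_nonneg _) (Ne.symm hne)
        have := Real.sqrt_pos.mpr hpos
        rw [hCdef, frobV] at h
        linarith
      have h1 : ∀ i ∈ Finset.univ, ∑ k, (v k i) ^ 2 = 0 := by
        intro i _
        have := Finset.sum_eq_zero_iff_of_nonneg (fun i _ =>
          Finset.sum_nonneg fun k _ => sq_nonneg (v k i)) |>.mp hz
        exact this i (Finset.mem_univ i)
      have h2 := Finset.sum_eq_zero_iff_of_nonneg (fun k _ => sq_nonneg (v k i)) |>.mp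
        (h1 i (Finset.mem_univ i)) k (Finset.mem_univ k)
      simpa using pow_eq_zero_iff (n := 2) (by norm_num) |>.mp h2
    · exact h
  have hvkC : ∀ k, ‖v k‖ ≤ C := by
    intro k
    have h1 : ‖v k‖ ^ 2 ≤ C ^ 2 := by
      rw [hC2]
      exact Finset.single_le_sum (fun k _ => sq_nonneg ‖v k‖) (Finset.mem_univ k)
    nlinarith [norm_nonneg (v k)]
  set a : Fin K → ℝ := fun k => ⟪v k, r⟫ with hadef
  have haC : ∀ k, |a k| ≤ C * t := fun k =>
    (abs_real_inner_le_norm (v k) r).trans (by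
      exact mul_le_mul_of_nonneg_right (hvkC k) ht0)
  have hak2 : ∀ k, (a k) ^ 2 ≤ ‖v k‖ ^ 2 * t ^ 2 := by
    intro k
    have h := abs_real_inner_le_norm (v k) r
    nlinarith [abs_nonneg (a k), sq_abs (a k)]
  -- gradient bound
  have hG : ⟪mcgrad v y x, r⟫ ≤ 2 * (1 - p) * (C * t) := by
    have he : ⟪mcgrad v y x, r⟫ =
        ∑ k, (q k - if k = y then (1 : ℝ) else 0) * a k := by
      rw [mcgrad, sum_inner]
      exact Finset.sum_congr rfl fun k _ => real_inner_smul_left _ _ _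
    rw [he]
    have hb : ∀ k ∈ Finset.univ, (q k - if k = y then (1 : ℝ) else 0) * a k ≤
        (q k + if k = y then 1 - 2 * p else 0) * (C * t) := by
      intro k _
      have h1 : (q k - if k = y then (1 : ℝ) else 0) * a k ≤
          |q k - if k = y then (1 : ℝ) else 0| * |a k| :=
        (le_abs_self _).trans (le_of_eq (abs_mul _ _))
      have h2 : |q k - if k = y then (1 : ℝ) else 0| =
          q k + (if k = y then 1 - 2 * p else 0) := by
        split_ifs with h
        · subst h
          rw [abs_of_nonpos (by linarith)]
          ring
        · rw [sub_zero, abs_of_nonneg (hqpos k).le, add_zero]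
      have h3 : 0 ≤ q k + (if k = y then 1 - 2 * p else 0) := by
        rw [← h2]; exact abs_nonneg _
      calc (q k - if k = y then (1 : ℝ) else 0) * a k
          ≤ |q k - if k = y then (1 : ℝ) else 0| * |a k| := h1
        _ ≤ (q k + if k = y then 1 - 2 * p else 0) * (C * t) := by
            rw [h2]; exact mul_le_mul_of_nonneg_left (haC k) h3
    calc ∑ k, (q k - if k = y then (1 : ℝ) else 0) * a k
        ≤ ∑ k, (q k + if k = y then 1 - 2 * p else 0) * (C * t) :=
          Finset.sum_le_sum hb
      _ = 2 * (1 - p) * (C * t) := by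
          rw [← Finset.sum_mul, Finset.sum_add_distrib, hqsum,
            Finset.sum_ite_eq' Finset.univ y fun _ => 1 - 2 * p]
          simp only [Finset.mem_univ, if_true]
          ring
  -- Hessian bound
  have hQF : ⟪r, Matrix.toEuclideanLin (mchess v x) r⟫ ≤ 2 * (p * (1 - p)) * (C ^ 2 * t ^ 2) := by
    have he : ⟪r, Matrix.toEuclideanLin (mchess v x) r⟫ =
        ∑ i : Fin K, ∑ j : Fin K,
          (if i < j then q i * q j * (a i - a j) ^ 2 else 0) := by
      rw [mchess, map_sum]
      rw [LinearMap.coe_sum, Finset.sum_apply, inner_sum]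
      refine Finset.sum_congr rfl fun i _ => ?_
      rw [map_sum, LinearMap.coe_sum, Finset.sum_apply, inner_sum]
      refine Finset.sum_congr rfl fun j _ => ?_
      split_ifs with h
      · rw [map_smul, LinearMap.smul_apply, inner_smul_right, inner_outer]
        have : ⟪v i - v j, r⟫ = a i - a j := by
          rw [inner_sub_left]
        rw [this]
      · simp
    rw [he]
    have hmono : ∑ i : Fin K, ∑ j : Fin K,
          (if i < j then q i * q j * (a i - a j) ^ 2 else 0)
        ≤ ∑ i : Fin K, ∑ j : Fin K,
          (if i < j then q i * q j * (2 * (a i) ^ 2 + 2 * (a j) ^ 2) else 0) := by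
      refine Finset.sum_le_sum fun i _ => Finset.sum_le_sum fun j _ => ?_
      split_ifs with h
      · have hq : 0 ≤ q i * q j := mul_nonneg (hqpos i).le (hqpos j).le
        nlinarith [sq_nonneg (a i + a j)]
      · exact le_rfl
    refine hmono.trans ?_
    have hsym : ∀ i j : Fin K, q i * q j * (2 * (a i) ^ 2 + 2 * (a j) ^ 2)
        = q j * q i * (2 * (a j) ^ 2 + 2 * (a i) ^ 2) := fun i j => by ring
    rw [pairSum _ hsym, div_le_iff₀ (by norm_num : (0:ℝ) < 2)]
    set W : ℝ := ∑ k, q k * (a k) ^ 2 with hWdef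
    have hTval : ∑ i : Fin K, ∑ j : Fin K, q i * q j * (2 * (a i) ^ 2 + 2 * (a j) ^ 2)
        = 4 * W := by
      have hinner : ∀ i : Fin K, ∑ j : Fin K, q i * q j * (2 * (a i) ^ 2 + 2 * (a j) ^ 2)
          = 2 * (q i * (a i) ^ 2) + 2 * q i * W := by
        intro i
        have e1 : ∀ j : Fin K, q i * q j * (2 * (a i) ^ 2 + 2 * (a j) ^ 2)
            = (2 * (q i * (a i) ^ 2)) * q j + (2 * q i) * (q j * (a j) ^ 2) := fun j => by ring
        rw [Finset.sum_congr rfl fun j _ => e1 j, Finset.sum_add_distrib,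
          ← Finset.mul_sum, ← Finset.mul_sum, hqsum, mul_one]
      rw [Finset.sum_congr rfl fun i _ => hinner i, Finset.sum_add_distrib,
        ← Finset.mul_sum]
      have e2 : ∀ i : Fin K, 2 * q i * W = (q i) * (2 * W) := fun i => by ring
      rw [Finset.sum_congr rfl fun i _ => e2 i, ← Finset.sum_mul, hqsum]
      ring
    have hDval : ∑ i : Fin K, q i * q i * (2 * (a i) ^ 2 + 2 * (a i) ^ 2)
        = ∑ i : Fin K, 4 * (q i * q i * (a i) ^ 2) :=
      Finset.sum_congr rfl fun i _ => by ring
    rw [hTval, hDval]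
    have hWb : W - ∑ k, q k * q k * (a k) ^ 2 ≤ p * (1 - p) * ∑ k, (a k) ^ 2 := by
      rw [← Finset.sum_sub_distrib, Finset.mul_sum]
      refine Finset.sum_le_sum fun k _ => ?_
      have hq1 : q k * (1 - q k) ≤ p * (1 - p) := by
        rcases eq_or_ne k y with h | h
        · rw [h]
        · nlinarith [hqle k, hpair k h, hqpos k]
      have hm := mul_le_mul_of_nonneg_right hq1 (sq_nonneg (a k))
      linarith [hm]
    have hsum_a : ∑ k, (a k) ^ 2 ≤ C ^ 2 * t ^ 2 := by
      calc ∑ k, (a k) ^ 2 ≤ ∑ k, ‖v k‖ ^ 2 * t ^ 2 := Finset.sum_le_sum fun k _ => hak2 k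
        _ = C ^ 2 * t ^ 2 := by rw [← Finset.sum_mul, ← hC2]
    have hpp : 0 ≤ p * (1 - p) := mul_nonneg hppos.le (by linarith)
    have hD4 : ∑ i : Fin K, 4 * (q i * q i * (a i) ^ 2)
        = 4 * ∑ i : Fin K, q i * q i * (a i) ^ 2 := by rw [Finset.mul_sum]
    rw [hD4]
    linarith [hWb, mul_le_mul_of_nonneg_left hsum_a hpp]
  -- final algebra
  have hξ : Real.log K + Real.log p ≤ 2 * (1 - p) * (C * t) + p * (1 - p) * (C ^ 2 * t ^ 2) := by
    have hr' : - Real.log p + ⟪mcgrad v y x, r⟫ +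
        (1 / 2) * ⟪r, Matrix.toEuclideanLin (mchess v x) r⟫ ≥ Real.log K := hr
    linarith [hG, hQF]
  set ξ : ℝ := Real.log K + Real.log p with hxidef
  have h2 : p * ξ / (1 - p) ≤ 2 * (p * C * t) + (p * C * t) ^ 2 := by
    rw [div_le_iff₀ (by linarith : (0:ℝ) < 1 - p)]
    have hm := mul_le_mul_of_nonneg_left hξ hppos.le
    linarith [hm]
  have hX : 1 + p * ξ / (1 - p) ≤ (1 + p * C * t) ^ 2 := by linarith [h2]
  have h0 : (0:ℝ) ≤ 1 + p * C * t := by positivity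
  have hsqrt : Real.sqrt (1 + p * ξ / (1 - p)) ≤ 1 + p * C * t :=
    (Real.sqrt_le_sqrt hX).trans (le_of_eq (Real.sqrt_sq h0))
  show t ≥ 1 / (p * C) *
      (Real.sqrt (1 + p * (Real.log K + Real.log p) / (1 - p)) - 1)
  have hpC : 0 < p * C := mul_pos hppos hCpos
  rw [ge_iff_le, one_div]
  calc (p * C)⁻¹ * (Real.sqrt (1 + p * (Real.log ↑K + Real.log p) / (1 - p)) - 1)
      ≤ (p * C)⁻¹ * (p * C * t) := by
        refine mul_le_mul_of_nonneg_left ?_ (inv_nonneg.mpr hpC.le)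
        have : Real.sqrt (1 + p * (Real.log ↑K + Real.log p) / (1 - p))
            = Real.sqrt (1 + p * ξ / (1 - p)) := rfl
        rw [this]
        linarith
    _ = t := by field_simp
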